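/- arXiv:2004.09051 — 2 statements merged into one kernel-verified Lean document; each statement's English description precedes it below -/
import Mathlib

section
/- For every natural number k, the sum over i from 0 to k-1 of (2^k / 2^(i+1)) · 2^i equals k · 2^(k-1). Consequently, for n = 2^k, the total number of comparisons T(n) performed when inserting a sequence of n values into an initially empty black-white array satisfies T(n) = (n/2) · log₂ n ≤ n · log₂ n, i.e., the insertion of a sequence of n = 2^k values takes O(n log n) time. -/
/-! Every rank contributes the same amount: there are `2^k / 2^(i+1) = 2^(k-1-i)` merges of rank `i`,
each costing `2^i`, so each of the `k` ranks costs `2^(k-1)` comparisons. -/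

theorem Nat.pow_div_pow_succ_mul_pow {b k i : ℕ} (hb : 0 < b) (hi : i < k) :
    b ^ k / b ^ (i + 1) * b ^ i = b ^ (k - 1) := by
  rw [Nat.pow_div hi hb, ← pow_add]
  congr 1
  omega

theorem Nat.sum_range_pow_div_pow_succ_mul_pow {b : ℕ} (hb : 0 < b) (k : ℕ) :
    ∑ i ∈ Finset.range k, b ^ k / b ^ (i + 1) * b ^ i = k * b ^ (k - 1) := by
  rw [Finset.sum_congr rfl fun i hi => Nat.pow_div_pow_succ_mul_pow hb (Finset.mem_range.mp hi),
    Finset.sum_const, Finset.card_range, smul_eq_mul]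

/-- Insert Time: inserting `n = 2^k` values into a black-white array performs
`T(n) = Σ_{i=0}^{k-1} (2^k / 2^(i+1)) · 2^i = k · 2^(k-1) = (n/2) · log₂ n`
comparisons, which is at most `n · log₂ n`. -/
theorem bwa_insert_time (k : ℕ) :
    ∑ i ∈ Finset.range k, (2 ^ k / 2 ^ (i + 1)) * 2 ^ i = k * 2 ^ (k - 1) ∧
    k * 2 ^ (k - 1) ≤ 2 ^ k * k :=
  ⟨Nat.sum_range_pow_div_pow_succ_mul_pow two_pos k,
    mul_comm (2 ^ k) k ▸ Nat.mul_le_mul_left k (Nat.pow_le_pow_right two_pos (Nat.sub_le k 1))⟩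
end

section
/- For every natural number m ≥ 1, the real-number inequality Σ_{i=1}^{m-1} (1/2^i) · (Σ_{j=1}^{i} (m - j)) + (1/2^(m-1)) · (Σ_{j=1}^{m-1} (m - j)) ≤ 2(m - 1) holds. (This is the Search Time (Hit) theorem: for a black-white array with up to n = 2^m values whose stored values are uniformly distributed, the expected number of comparisons of a successful search is at most 2(m-1) = O(log n).) -/
/-!
The left-hand side has the exact value `2 (m - 2) + 2 / 2^(m-1)`, which is at most `2 (m - 1)`
because `2^(m-1) ≥ 1`. The closed form is proved for an arbitrary real `x` in place of `m`:
passing from `M` to `M + 1` segments changes the sum by exactly `(x - (M + 1)) / 2^M`.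
-/

open Finset

theorem sum_Icc_inv_two_pow_mul_sum_sub_add (x : ℝ) (M : ℕ) :
    (∑ i ∈ Icc 1 M, (1 / 2 ^ i : ℝ) * ∑ j ∈ Icc 1 i, (x - (j : ℝ))) +
        (1 / 2 ^ M : ℝ) * ∑ j ∈ Icc 1 M, (x - (j : ℝ)) =
      2 * (x - 2) + 2 * ((M : ℝ) + 2 - x) / 2 ^ M := by
  induction M with
  | zero => norm_num; ring
  | succ M ih =>
    rw [sum_Icc_succ_top (by omega), sum_Icc_succ_top (by omega)]
    push_cast
    linear_combination ih

/-- Search Time (Hit): the expected number of comparisons of a successful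
search in a black-white array with up to `n = 2^m` uniformly distributed
values,
`Σ_{i=1}^{m-1} (1/2^i) Σ_{j=1}^{i} (m-j) + (1/2^(m-1)) Σ_{j=1}^{m-1} (m-j)`,
is at most `2(m - 1)`. -/
theorem bwa_hit_search_time (m : ℕ) (hm : 1 ≤ m) :
    (∑ i ∈ Finset.Icc 1 (m - 1),
        (1 / 2 ^ i : ℝ) * ∑ j ∈ Finset.Icc 1 i, ((m : ℝ) - (j : ℝ))) +
      (1 / 2 ^ (m - 1) : ℝ) * ∑ j ∈ Finset.Icc 1 (m - 1), ((m : ℝ) - (j : ℝ)) ≤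
      2 * ((m : ℝ) - 1) := by
  obtain ⟨M, rfl⟩ : ∃ M, m = M + 1 := ⟨m - 1, by omega⟩
  rw [Nat.add_sub_cancel, sum_Icc_inv_two_pow_mul_sum_sub_add]
  have h : 2 / (2 : ℝ) ^ M ≤ 2 := div_le_self zero_le_two (one_le_pow₀ one_le_two)
  push_cast
  rw [show (M : ℝ) + 2 - (M + 1) = 1 by ring, mul_one]
  linarith
end
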